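/- For λ ∈ ℂ \ {0, 1}, let π_λ be the system of subspaces of V = ℂ⁴ with basis e₁, e₂, e₃, e₄ consisting of the chain V₁ = span{e₁} ⊆ V₂ = span{e₁, e₂} ⊆ V₃ = span{e₁, e₂, e₃}, the chain V₄ = span{e₄} ⊆ V₅ = span{e₃, e₄} ⊆ V₆ = span{e₂, e₃, e₄}, and the single subspace V₇ = span{e₁+e₂+e₃, λe₁+e₃+e₄} (so π_λ is a representation of the primitive poset that is the disjoint sum of two 3-element chains and one singleton). Then each π_λ is indecomposable, and for λ ≠ μ (both in ℂ \ {0,1}) the representations π_λ and π_μ are not isomorphic; in particular this poset has infinitely many pairwise non-isomorphic indecomposable representations. -/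

import Mathlib

noncomputable section

/-- A system of subspaces `A : ι → Submodule ℂ V` is decomposable if the ambient space
splits as a direct sum of two nonzero subspaces compatible with every member of the system
(internal reformulation of being isomorphic to a direct sum of two representations with
nonzero ambient spaces). -/
def IsDecomposableSystem {ι V : Type*} [AddCommGroup V] [Module ℂ V]
    (A : ι → Submodule ℂ V) : Prop :=
  ∃ U W : Submodule ℂ V, IsCompl U W ∧ U ≠ ⊥ ∧ W ≠ ⊥ ∧
    ∀ i, A i = A i ⊓ U ⊔ A i ⊓ W

/-- A system of subspaces is indecomposable if the ambient space is nonzero and the system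
is not decomposable. -/
def IsIndecomposableSystem {ι V : Type*} [AddCommGroup V] [Module ℂ V]
    (A : ι → Submodule ℂ V) : Prop :=
  (∃ v : V, v ≠ 0) ∧ ¬ IsDecomposableSystem A

/-- Two systems of subspaces are isomorphic if there is an invertible linear map carrying
each member of the first system onto the corresponding member of the second. -/
def RepIso {ι V W : Type*} [AddCommGroup V] [Module ℂ V] [AddCommGroup W] [Module ℂ W]
    (A : ι → Submodule ℂ V) (B : ι → Submodule ℂ W) : Prop :=
  ∃ C : V ≃ₗ[ℂ] W, ∀ i, (A i).map (C : V →ₗ[ℂ] W) = B i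

/-- The representation `π_λ` of the primitive poset `(3,3,1)` in `ℂ⁴`: the chains
`V₁ = span{e₁} ⊆ V₂ = span{e₁,e₂} ⊆ V₃ = span{e₁,e₂,e₃}`,
`V₄ = span{e₄} ⊆ V₅ = span{e₃,e₄} ⊆ V₆ = span{e₂,e₃,e₄}`, and the single subspace
`V₇ = span{e₁+e₂+e₃, λe₁+e₃+e₄}` (indices `0,…,6` for `V₁,…,V₇`). -/
def piRep (lam : ℂ) : Fin 7 → Submodule ℂ (Fin 4 → ℂ) :=
  ![Submodule.span ℂ {![1, 0, 0, 0]},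
    Submodule.span ℂ {![1, 0, 0, 0], ![0, 1, 0, 0]},
    Submodule.span ℂ {![1, 0, 0, 0], ![0, 1, 0, 0], ![0, 0, 1, 0]},
    Submodule.span ℂ {![0, 0, 0, 1]},
    Submodule.span ℂ {![0, 0, 1, 0], ![0, 0, 0, 1]},
    Submodule.span ℂ {![0, 1, 0, 0], ![0, 0, 1, 0], ![0, 0, 0, 1]},
    Submodule.span ℂ {![1, 1, 1, 0], ![lam, 0, 1, 1]}]

/-!
Every linear map `P` carrying each subspace of `π_λ` into the corresponding subspace of `π_μ`
is a scalar `a` with `λ a = μ a`. Each line `ℂ eⱼ` is the intersection of the members of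
the two chains containing it, so `P` is diagonal; the two generators of `V₇` then force all
diagonal entries to be equal and give `λ a = μ a`. Applied to the projection along a
decomposition, which is `1` on one summand and `0` on the other, this shows that `π_λ` is
indecomposable; applied to an isomorphism, which cannot be `0`, it shows `λ = μ`.
-/

theorem Submodule.apply_eq_zero_of_mem_span {R ι : Type*} [Semiring R] {s : Set (ι → R)}
    {k : ι} (hs : ∀ x ∈ s, x k = 0) {v : ι → R} (hv : v ∈ Submodule.span R s) : v k = 0 :=
  Submodule.span_le (p := LinearMap.ker (LinearMap.proj k)) |>.mpr hs hv

theorem LinearMap.exists_apply_eq_mul_of_single_apply_eq_zero {R ι : Type*} [CommSemiring R]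
    [Fintype ι] [DecidableEq ι] {P : (ι → R) →ₗ[R] (ι → R)}
    (hP : ∀ j k, j ≠ k → P (Pi.single j 1) k = 0) :
    ∃ d : ι → R, ∀ v k, P v k = d k * v k := by
  refine ⟨fun k => P (Pi.single k 1) k, fun v k => ?_⟩
  conv_lhs => rw [pi_eq_sum_univ' v, map_sum]
  rw [Finset.sum_apply, Finset.sum_eq_single k (fun j _ hjk => by simp [hP j k hjk]) (by simp)]
  simp [mul_comm]

section

variable {ι V W : Type*} [AddCommGroup V] [Module ℂ V] [Nontrivial V]

open Submodule in
theorem isIndecomposableSystem_of_forall_eq_smul_id {A : ι → Submodule ℂ V}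
    (h : ∀ P : V →ₗ[ℂ] V, (∀ i, (A i).map P ≤ A i) → ∃ a : ℂ, P = a • LinearMap.id) :
    IsIndecomposableSystem A := by
  refine ⟨exists_ne 0, ?_⟩
  rintro ⟨U₁, U₂, hU, hU₁, hU₂, hA⟩
  have hP : ∀ i, (A i).map (U₁.projection U₂ hU) ≤ A i := by
    rintro i _ ⟨v, hv, rfl⟩
    rw [hA i] at hv
    obtain ⟨u, hu, w, hw, rfl⟩ := mem_sup.mp hv
    rw [map_add, projection_apply_of_mem_left hU hu.2, projection_apply_of_mem_right hU hw.2,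
      add_zero]
    exact hu.1
  obtain ⟨a, ha⟩ := h _ hP
  obtain ⟨u, hu, hu0⟩ := U₁.ne_bot_iff.mp hU₁
  obtain ⟨w, hw, hw0⟩ := U₂.ne_bot_iff.mp hU₂
  have hu' := projection_apply_of_mem_left hU hu
  have hw' := projection_apply_of_mem_right hU hw
  rw [ha] at hu' hw'
  have ha1 : a = 1 := smul_left_injective ℂ hu0 (by simpa using hu')
  simp [ha1, hw0] at hw'

theorem not_repIso_of_forall_eq_zero [AddCommGroup W] [Module ℂ W] {A : ι → Submodule ℂ V}
    {B : ι → Submodule ℂ W} (h : ∀ P : V →ₗ[ℂ] W, (∀ i, (A i).map P ≤ B i) → P = 0) :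
    ¬ RepIso A B := by
  rintro ⟨C, hC⟩
  obtain ⟨v, hv⟩ := exists_ne (0 : V)
  have hC0 := h C fun i => (hC i).le
  exact hv (C.map_eq_zero_iff.mp (by simpa using LinearMap.congr_fun hC0 v))

end

theorem piRep_chains (lam : ℂ) : piRep lam 0 ≤ piRep lam 1 ∧ piRep lam 1 ≤ piRep lam 2 ∧
    piRep lam 3 ≤ piRep lam 4 ∧ piRep lam 4 ≤ piRep lam 5 := by
  refine ⟨Submodule.span_mono ?_, Submodule.span_mono ?_, Submodule.span_mono ?_,
    Submodule.span_mono ?_⟩ <;> simp [Set.insert_subset_iff]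

open Submodule in
theorem single_apply_eq_zero_of_map_piRep_le {lam mu : ℂ}
    {P : (Fin 4 → ℂ) →ₗ[ℂ] (Fin 4 → ℂ)} (hP : ∀ i, (piRep lam i).map P ≤ piRep mu i)
    {j k : Fin 4} (hjk : j ≠ k) : P (Pi.single j 1) k = 0 := by
  -- `eⱼ` lies in `piRep lam (witness j k)`, a member of the chains on which coordinate `k`
  -- vanishes when `j ≠ k`
  let witness : Fin 4 → Fin 4 → Fin 7 :=
    ![![0, 0, 0, 0], ![5, 1, 1, 1], ![4, 4, 2, 2], ![3, 3, 3, 3]]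
  have hj : Pi.single j 1 ∈ piRep lam (witness j k) := by
    fin_cases j <;> fin_cases k <;>
      exact subset_span (by simp [funext_iff, Fin.forall_fin_succ])
  have hk : ∀ x ∈ piRep mu (witness j k), x k = 0 := by
    fin_cases j <;> fin_cases k <;> simp at hjk <;>
      exact fun _ => apply_eq_zero_of_mem_span (by simp)
  exact hk _ (hP _ (mem_map_of_mem hj))

theorem eq_of_mem_piRep_six {mu : ℂ} {v : Fin 4 → ℂ} (hv : v ∈ piRep mu 6) :
    v 2 = v 1 + v 3 ∧ v 0 = v 1 + mu * v 3 := by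
  obtain ⟨p, q, rfl⟩ := Submodule.mem_span_pair.mp hv
  simp [mul_comm]

open Submodule in
theorem exists_eq_smul_id_of_map_piRep_le {lam mu : ℂ} {P : (Fin 4 → ℂ) →ₗ[ℂ] (Fin 4 → ℂ)}
    (hP : ∀ i, (piRep lam i).map P ≤ piRep mu i) :
    ∃ a : ℂ, P = a • LinearMap.id ∧ lam * a = mu * a := by
  obtain ⟨d, hd⟩ := LinearMap.exists_apply_eq_mul_of_single_apply_eq_zero
    fun _ _ hjk => single_apply_eq_zero_of_map_piRep_le hP hjk
  have image_mem (v : Fin 4 → ℂ) (hv : v ∈ piRep lam 6) :=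
    eq_of_mem_piRep_six (hP 6 (mem_map_of_mem hv))
  obtain ⟨h₂, h₀⟩ := image_mem ![1, 1, 1, 0] (subset_span (by simp))
  obtain ⟨h₂', h₀'⟩ := image_mem ![lam, 0, 1, 1] (subset_span (by simp))
  simp only [hd, Matrix.cons_val, Matrix.cons_val_zero, Matrix.cons_val_one, mul_one, mul_zero,
    add_zero, zero_add] at h₂ h₀ h₂' h₀'
  have hconst : ∀ k, d k = d 0 := by
    intro k
    fin_cases k <;> grind
  refine ⟨d 0, LinearMap.ext fun v => funext fun k => ?_, ?_⟩
  · simp [hd, hconst k]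
  · linear_combination h₀' + mu * hconst 3

theorem isIndecomposableSystem_piRep (lam : ℂ) : IsIndecomposableSystem (piRep lam) :=
  isIndecomposableSystem_of_forall_eq_smul_id fun _ hP =>
    (exists_eq_smul_id_of_map_piRep_le hP).imp fun _ ha => ha.1

theorem not_repIso_piRep {lam mu : ℂ} (h : lam ≠ mu) : ¬ RepIso (piRep lam) (piRep mu) :=
  not_repIso_of_forall_eq_zero fun _ hP => by
    obtain ⟨a, rfl, ha⟩ := exists_eq_smul_id_of_map_piRep_le hP
    simp [(mul_eq_mul_right_iff.mp ha).resolve_left h]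


/-- Each `π_λ` (λ ≠ 0, 1) is a representation of the primitive poset which is the disjoint
sum of two 3-element chains and one singleton, and is indecomposable; `π_λ ≇ π_μ` for
`λ ≠ μ`; in particular this poset has infinitely many pairwise non-isomorphic
indecomposable representations. -/
theorem poset331_infinite_family :
    (∀ lam : ℂ, piRep lam 0 ≤ piRep lam 1 ∧ piRep lam 1 ≤ piRep lam 2 ∧
      piRep lam 3 ≤ piRep lam 4 ∧ piRep lam 4 ≤ piRep lam 5) ∧
    (∀ lam : ℂ, lam ≠ 0 → lam ≠ 1 → IsIndecomposableSystem (piRep lam)) ∧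
    (∀ lam mu : ℂ, lam ≠ 0 → lam ≠ 1 → mu ≠ 0 → mu ≠ 1 → lam ≠ mu →
      ¬ RepIso (piRep lam) (piRep mu)) ∧
    (∃ f : ℕ → (Fin 7 → Submodule ℂ (Fin 4 → ℂ)),
      (∀ n, f n 0 ≤ f n 1 ∧ f n 1 ≤ f n 2 ∧ f n 3 ≤ f n 4 ∧ f n 4 ≤ f n 5) ∧
      (∀ n, IsIndecomposableSystem (f n)) ∧
      ∀ n m, n ≠ m → ¬ RepIso (f n) (f m)) :=
  ⟨piRep_chains, fun lam _ _ => isIndecomposableSystem_piRep lam,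
    fun _ _ _ _ _ _ => not_repIso_piRep, fun n => piRep n, fun n => piRep_chains n,
    fun n => isIndecomposableSystem_piRep n,
    fun _ _ hnm => not_repIso_piRep (Nat.cast_injective.ne hnm)⟩
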